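/- arXiv:1710.03085 — 3 statements merged into one kernel-verified Lean document; each statement's English description precedes it below -/
import Mathlib

section
/- Let Γ act isometrically on a compact metric space M, let F ⊆ Γ be a finite normal subgroup, set Γ' = Γ/F and M' = M/F (with quotient metric). Then for every t > 0 the natural quotient map π : (M, d_t^Γ) → (M', d_t^{Γ'}) is a (1, B)-quasi-isometry, where B is the maximal word length in Γ of an element of F. -/
/-- Word norm of `g` with respect to a generating set `S`. -/
noncomputable def wordNorm {G : Type*} [Group G] (S : Set G) (g : G) : ℕ :=
  sInf {n | ∃ l : List G, l.length = n ∧ (∀ x ∈ l, x ∈ S) ∧ l.prod = g}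

/-- The warped distance at time `t` for the action of `G` on `M`:
`d_t^Γ(x,y) = inf_{γ ∈ Γ} (t · d_M(x, γ·y) + ‖γ‖_Γ)`. -/
noncomputable def warpedDist {G M : Type*} [Group G] [MetricSpace M] [MulAction G M]
    (S : Set G) (t : ℝ) (x y : M) : ℝ :=
  ⨅ γ : G, (t * dist x (γ • y) + (wordNorm S γ : ℝ))

/-- The warped distance at time `t` for the quotient action of `Γ' = Γ/F` on `M' = M/F`,
pulled back to `M`:  here the quotient metric on `M/F` is
`d_{M/F}(πx, πy) = inf_{f ∈ F} d_M(x, f·y)`, and word lengths in `Γ/F` are taken with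
respect to the image of `S`. -/
noncomputable def warpedDistQuot {G M : Type*} [Group G] [MetricSpace M] [MulAction G M]
    (S : Set G) (F : Subgroup G) [F.Normal] (t : ℝ) (x y : M) : ℝ :=
  ⨅ γ : G, (t * (⨅ f : F, dist x ((f : G) • (γ • y))) +
    (wordNorm ((QuotientGroup.mk : G → G ⧸ F) '' S) (QuotientGroup.mk γ) : ℝ))

/-!
Every `γ ∈ Γ` can be replaced, without changing its class in `Γ/F`, by an element `γ'` with
`‖γ'‖_Γ ≤ ‖γF‖_{Γ/F}` (lift a shortest word of `Γ/F` letter by letter). Then `fγ = (fγγ'⁻¹)γ'`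
with `fγγ'⁻¹ ∈ F`, so `‖fγ‖_Γ ≤ B + ‖γF‖_{Γ/F}` for every `f ∈ F`. Comparing the infima
defining the two warped distances term by term gives `d_t^{Γ'} ≤ d_t^Γ ≤ d_t^{Γ'} + B`.
-/

lemma List.exists_map_eq_of_forall_mem_image {α β : Type*} {f : α → β} {s : Set α} :
    ∀ {l' : List β}, (∀ x ∈ l', x ∈ f '' s) → ∃ l : List α, (∀ x ∈ l, x ∈ s) ∧ l.map f = l'
  | [], _ => ⟨[], by simp, rfl⟩
  | b :: l', h => by
    obtain ⟨a, ha, rfl⟩ := h b List.mem_cons_self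
    obtain ⟨l, hl, rfl⟩ :=
      List.exists_map_eq_of_forall_mem_image fun x hx => h x (List.mem_cons_of_mem _ hx)
    exact ⟨a :: l, List.forall_mem_cons.2 ⟨ha, hl⟩, rfl⟩

section WordNorm

variable {G : Type*} [Group G] {S : Set G}

lemma Submonoid.closure_eq_top_of_inv_mem (hinv : ∀ g ∈ S, g⁻¹ ∈ S)
    (h : Subgroup.closure S = ⊤) : Submonoid.closure S = ⊤ := by
  have hS : S ∪ S⁻¹ = S := Set.union_eq_left.2 fun g hg => by simpa using hinv _ hg
  rw [← hS, ← Subgroup.closure_toSubmonoid, h, Subgroup.top_toSubmonoid]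

lemma wordNorm_prod_le_length {l : List G} (hl : ∀ x ∈ l, x ∈ S) :
    wordNorm S l.prod ≤ l.length :=
  Nat.sInf_le ⟨l, rfl, hl, rfl⟩

lemma exists_length_eq_wordNorm {g : G} (hg : g ∈ Submonoid.closure S) :
    ∃ l : List G, l.length = wordNorm S g ∧ (∀ x ∈ l, x ∈ S) ∧ l.prod = g := by
  obtain ⟨l, hl, rfl⟩ := Submonoid.exists_list_of_mem_closure hg
  exact Nat.sInf_mem
    (s := {n | ∃ l' : List G, l'.length = n ∧ (∀ x ∈ l', x ∈ S) ∧ l'.prod = l.prod})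
    ⟨_, l, rfl, hl, rfl⟩

lemma wordNorm_one : wordNorm S 1 = 0 :=
  Nat.le_zero.1 (wordNorm_prod_le_length (l := []) (by simp))

lemma wordNorm_mul_le (hS : Submonoid.closure S = ⊤) (g h : G) :
    wordNorm S (g * h) ≤ wordNorm S g + wordNorm S h := by
  obtain ⟨l₁, hlen₁, hl₁, rfl⟩ := exists_length_eq_wordNorm (hS ▸ Submonoid.mem_top g)
  obtain ⟨l₂, hlen₂, hl₂, rfl⟩ := exists_length_eq_wordNorm (hS ▸ Submonoid.mem_top h)
  rw [← hlen₁, ← hlen₂, ← List.length_append, ← List.prod_append]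
  exact wordNorm_prod_le_length fun x hx => (List.mem_append.1 hx).elim (hl₁ x) (hl₂ x)

variable {H : Type*} [Group H]

lemma wordNorm_map_le (φ : G →* H) {g : G} (hg : g ∈ Submonoid.closure S) :
    wordNorm (φ '' S) (φ g) ≤ wordNorm S g := by
  obtain ⟨l, hlen, hl, rfl⟩ := exists_length_eq_wordNorm hg
  rw [← hlen, map_list_prod, ← List.length_map φ]
  exact wordNorm_prod_le_length
    (List.forall_mem_map.2 fun x hx => Set.mem_image_of_mem φ (hl x hx))

lemma exists_map_eq_wordNorm_le (φ : G →* H) {g : G} (hg : g ∈ Submonoid.closure S) :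
    ∃ g', φ g' = φ g ∧ wordNorm S g' ≤ wordNorm (φ '' S) (φ g) := by
  have hφg : φ g ∈ Submonoid.closure (φ '' S) :=
    MonoidHom.map_mclosure φ S ▸ Submonoid.mem_map_of_mem φ hg
  obtain ⟨l', hlen, hl', hprod⟩ := exists_length_eq_wordNorm hφg
  obtain ⟨l, hl, rfl⟩ := List.exists_map_eq_of_forall_mem_image hl'
  refine ⟨l.prod, by rw [map_list_prod, hprod], ?_⟩
  rw [← hlen, List.length_map]
  exact wordNorm_prod_le_length hl

lemma wordNorm_mul_le_add_wordNorm_mk {F : Subgroup G} [F.Normal]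
    (hS : Submonoid.closure S = ⊤) {B : ℕ} (hB : B ∈ upperBounds (wordNorm S '' F))
    {f : G} (hf : f ∈ F) (γ : G) :
    wordNorm S (f * γ) ≤ B + wordNorm ((QuotientGroup.mk : G → G ⧸ F) '' S) γ := by
  obtain ⟨γ', hγ', hle⟩ :=
    exists_map_eq_wordNorm_le (QuotientGroup.mk' F) (hS ▸ Submonoid.mem_top γ)
  rw [QuotientGroup.coe_mk'] at hγ' hle
  have hmem : f * γ * γ'⁻¹ ∈ F := by
    rw [mul_assoc, ← div_eq_mul_inv]
    exact F.mul_mem hf (QuotientGroup.eq_iff_div_mem.1 hγ'.symm)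
  calc wordNorm S (f * γ) = wordNorm S (f * γ * γ'⁻¹ * γ') := by rw [inv_mul_cancel_right]
    _ ≤ wordNorm S (f * γ * γ'⁻¹) + wordNorm S γ' := wordNorm_mul_le hS _ _
    _ ≤ B + wordNorm ((QuotientGroup.mk : G → G ⧸ F) '' S) γ :=
      add_le_add (hB ⟨_, hmem, rfl⟩) hle

end WordNorm

section OrbitDist

variable {G M : Type*} [Group G] [MetricSpace M] [MulAction G M] (F : Subgroup G)

noncomputable def orbitDist (x y : M) : ℝ :=
  ⨅ f : F, dist x ((f : G) • y)

variable {x y : M}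

lemma orbitDist_nonneg : 0 ≤ orbitDist F x y :=
  Real.iInf_nonneg fun _ => dist_nonneg

lemma orbitDist_le {g : G} (hg : g ∈ F) : orbitDist F x y ≤ dist x (g • y) :=
  ciInf_le ⟨0, Set.forall_mem_range.2 fun _ => dist_nonneg⟩ (⟨g, hg⟩ : F)

lemma orbitDist_le_dist : orbitDist F x y ≤ dist x y := by
  simpa using orbitDist_le F (one_mem F) (x := x) (y := y)

lemma orbitDist_smul_right {g : G} (hg : g ∈ F) : orbitDist F x (g • y) = orbitDist F x y := by
  conv_rhs => rw [orbitDist, ← (Equiv.mulRight (⟨g, hg⟩ : F)).iInf_comp]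
  simp [orbitDist, mul_smul]

lemma orbitDist_smul_left [IsIsometricSMul G M] {g : G} (hg : g ∈ F) :
    orbitDist F (g • x) y = orbitDist F x y := by
  rw [orbitDist, orbitDist, ← (Equiv.mulLeft (⟨g, hg⟩ : F)).iInf_comp]
  simp [mul_smul, dist_smul]

end OrbitDist

section WarpedDist

variable {G M : Type*} [Group G] [MetricSpace M] [MulAction G M] (S : Set G) (F : Subgroup G)
  [F.Normal] {t : ℝ} {x y : M}

lemma warpedDistQuot_eq_iInf_orbitDist (t : ℝ) (x y : M) :
    warpedDistQuot S F t x y = ⨅ γ : G, (t * orbitDist F x (γ • y) +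
      (wordNorm ((QuotientGroup.mk : G → G ⧸ F) '' S) (QuotientGroup.mk γ) : ℝ)) :=
  rfl

lemma warpedDistQuot_smul_left [IsIsometricSMul G M] {g : G} (hg : g ∈ F) :
    warpedDistQuot S F t (g • x) y = warpedDistQuot S F t x y := by
  simp only [warpedDistQuot_eq_iInf_orbitDist, orbitDist_smul_left F hg]

lemma warpedDistQuot_smul_right {g : G} (hg : g ∈ F) :
    warpedDistQuot S F t x (g • y) = warpedDistQuot S F t x y := by
  simp only [warpedDistQuot_eq_iInf_orbitDist]
  congr! 3 with γ
  rw [show γ • g • y = (γ * g * γ⁻¹) • γ • y by simp [smul_smul],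
    orbitDist_smul_right F (Subgroup.Normal.conj_mem ‹_› g hg γ)]

lemma warpedDist_le (ht : 0 ≤ t) (γ : G) :
    warpedDist S t x y ≤ t * dist x (γ • y) + wordNorm S γ :=
  ciInf_le ⟨0, Set.forall_mem_range.2 fun _ => by positivity⟩ γ

lemma warpedDistQuot_le (ht : 0 ≤ t) (γ : G) :
    warpedDistQuot S F t x y ≤ t * orbitDist F x (γ • y) +
      wordNorm ((QuotientGroup.mk : G → G ⧸ F) '' S) (QuotientGroup.mk γ) :=
  ciInf_le ⟨0, Set.forall_mem_range.2 fun _ =>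
    add_nonneg (mul_nonneg ht (orbitDist_nonneg F)) (Nat.cast_nonneg _)⟩ γ

lemma warpedDist_self_le_zero (ht : 0 ≤ t) : warpedDist S t x x ≤ 0 := by
  simpa [wordNorm_one] using warpedDist_le S ht 1 (x := x) (y := x)

lemma warpedDistQuot_le_warpedDist (ht : 0 ≤ t) (hS : Submonoid.closure S = ⊤) :
    warpedDistQuot S F t x y ≤ warpedDist S t x y := by
  refine le_ciInf fun γ => (warpedDistQuot_le S F ht γ).trans ?_
  have hword := wordNorm_map_le (QuotientGroup.mk' F) (hS ▸ Submonoid.mem_top γ)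
  rw [QuotientGroup.coe_mk'] at hword
  gcongr
  exact orbitDist_le_dist F

lemma warpedDist_le_warpedDistQuot_add (ht : 0 ≤ t) (hS : Submonoid.closure S = ⊤) {B : ℕ}
    (hB : B ∈ upperBounds (wordNorm S '' F)) :
    warpedDist S t x y ≤ warpedDistQuot S F t x y + B := by
  rw [warpedDistQuot_eq_iInf_orbitDist, ← sub_le_iff_le_add]
  refine le_ciInf fun γ => ?_
  rw [← sub_le_iff_le_add, orbitDist, Real.mul_iInf_of_nonneg ht]
  refine le_ciInf fun f => ?_
  have hword :
      (wordNorm S (f * γ) : ℝ) ≤ B + wordNorm ((QuotientGroup.mk : G → G ⧸ F) '' S) γ :=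
    mod_cast wordNorm_mul_le_add_wordNorm_mk hS hB f.2 γ
  have hdist := warpedDist_le S ht (f * γ) (x := x) (y := y)
  rw [mul_smul] at hdist
  linarith

end WarpedDist

theorem quotient_map_quasiIsometry_general {G M : Type*} [Group G] [MetricSpace M]
    [MulAction G M]
    (S : Set G) (hsymm : ∀ g ∈ S, g⁻¹ ∈ S)
    (hgen : Subgroup.closure S = ⊤)
    (hiso : ∀ γ : G, Isometry (fun x : M => γ • x))
    (F : Subgroup G) [F.Normal]
    (t : ℝ) (ht : 0 < t)
    (B : ℕ) (hB : IsGreatest (wordNorm S '' (F : Set G)) B) :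
    (∀ (x y : M) (f : F), warpedDistQuot S F t ((f : G) • x) y = warpedDistQuot S F t x y ∧
        warpedDistQuot S F t x ((f : G) • y) = warpedDistQuot S F t x y) ∧
    (∀ x y : M,
        warpedDist S t x y - (B : ℝ) ≤ warpedDistQuot S F t x y ∧
        warpedDistQuot S F t x y ≤ warpedDist S t x y + (B : ℝ)) ∧
    (∀ y : M, ∃ x : M, warpedDistQuot S F t x y ≤ (B : ℝ)) := by
  have : IsIsometricSMul G M := ⟨hiso⟩
  have hS := Submonoid.closure_eq_top_of_inv_mem hsymm hgen
  refine ⟨fun x y f => ⟨warpedDistQuot_smul_left S F f.2, warpedDistQuot_smul_right S F f.2⟩,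
    fun x y => ⟨?_, ?_⟩, fun y => ⟨y, ?_⟩⟩
  · linarith [warpedDist_le_warpedDistQuot_add S F ht.le hS hB.2 (x := x) (y := y)]
  · linarith [warpedDistQuot_le_warpedDist S F ht.le hS (x := x) (y := y),
      (Nat.cast_nonneg B : (0 : ℝ) ≤ B)]
  · calc warpedDistQuot S F t y y ≤ warpedDist S t y y := warpedDistQuot_le_warpedDist S F ht.le hS
      _ ≤ 0 := warpedDist_self_le_zero S ht.le
      _ ≤ B := Nat.cast_nonneg B

/-- For a finite normal subgroup `F ⊆ Γ`, the natural quotient map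
`(M, d_t^Γ) → (M/F, d_t^{Γ/F})` is a `(1, B)`-quasi-isometry, where `B` is the maximal
word length in `Γ` of an element of `F`.  The quotient distance is expressed on `M`
itself via `warpedDistQuot` (which descends to `M/F`, as recorded in the first two
conclusions), and the quotient map is surjective, giving the `C`-density condition. -/
theorem quotient_map_quasiIsometry {G M : Type*} [Group G] [MetricSpace M] [CompactSpace M]
    [MulAction G M]
    (S : Set G) (hSfin : S.Finite) (hsymm : ∀ g ∈ S, g⁻¹ ∈ S)
    (hgen : Subgroup.closure S = ⊤)
    (hiso : ∀ γ : G, Isometry (fun x : M => γ • x))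
    (F : Subgroup G) [F.Normal] (hF : (F : Set G).Finite)
    (t : ℝ) (ht : 0 < t)
    (B : ℕ) (hB : IsGreatest (wordNorm S '' (F : Set G)) B) :
    (∀ (x y : M) (f : F), warpedDistQuot S F t ((f : G) • x) y = warpedDistQuot S F t x y ∧
        warpedDistQuot S F t x ((f : G) • y) = warpedDistQuot S F t x y) ∧
    (∀ x y : M,
        warpedDist S t x y - (B : ℝ) ≤ warpedDistQuot S F t x y ∧
        warpedDistQuot S F t x y ≤ warpedDist S t x y + (B : ℝ)) ∧
    (∀ y : M, ∃ x : M, warpedDistQuot S F t x y ≤ (B : ℝ)) :=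
  quotient_map_quasiIsometry_general S hsymm hgen hiso F t ht B hB
end

section
/- Let X be a δ-hyperbolic geodesic metric space, let s be an isometry of X, and let x, y ∈ X with d(x, sx) < C and d(y, sy) < d for constants d, C > δ. Then there is a point z on a geodesic segment [x, y] satisfying d(z, sz) < 10C and d(y, z) < 10d. -/
/-!
Pick `z = seg u` far from both `x` and `y` (if `[x, y]` is short, or `d ≤ 10 C`, an endpoint
works). In the triangle `x, s y, y` the point `z` is too far from `y` to be near `[s y, y]`, so it
is `δ`-close to `[x, s y]`; in the triangle `x, s x, s y` that point is too far from `x` to be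
near `[x, s x]`, so it is `δ`-close to `s [x, y]`. Thus `z` is `2δ`-close to some `s (seg w)`,
and comparing distances from `x` and `s x` gives `|u - w| ≤ d(x, s x) + 2δ`, whence
`d(z, s z) ≤ d(x, s x) + 4δ < 10 C`.
-/

open Set

/-- `f` parametrizes a geodesic segment from `a` to `b` (by arclength on
`[0, dist a b]`). -/
def IsGeodesicSegment {X : Type*} [MetricSpace X] (f : ℝ → X) (a b : X) : Prop :=
  f 0 = a ∧ f (dist a b) = b ∧
    ∀ u ∈ Icc (0 : ℝ) (dist a b), ∀ v ∈ Icc (0 : ℝ) (dist a b),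
      dist (f u) (f v) = |u - v|

/-- `X` is a geodesic space: any two points are joined by a geodesic segment. -/
def GeodesicSpace (X : Type*) [MetricSpace X] : Prop :=
  ∀ a b : X, ∃ f : ℝ → X, IsGeodesicSegment f a b

/-- `X` is `δ`-hyperbolic: geodesic triangles are `δ`-thin, i.e. every point of one
side is within `δ` of the union of the other two sides. -/
def ThinTriangles {X : Type*} [MetricSpace X] (δ : ℝ) : Prop :=
  ∀ (a b c : X) (f g h : ℝ → X),
    IsGeodesicSegment f a b → IsGeodesicSegment g b c → IsGeodesicSegment h a c →
    ∀ u ∈ Icc (0 : ℝ) (dist a c),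
      ∃ p, (p ∈ f '' Icc (0 : ℝ) (dist a b) ∨ p ∈ g '' Icc (0 : ℝ) (dist b c)) ∧
        dist (h u) p ≤ δ

namespace IsGeodesicSegment

variable {X Y : Type*} [MetricSpace X] [MetricSpace Y] {f : ℝ → X} {a b : X} {u w : ℝ}

lemma dist_left (hf : IsGeodesicSegment f a b) (hu : u ∈ Icc 0 (dist a b)) :
    dist a (f u) = u := by
  obtain ⟨h0, -, hd⟩ := hf
  rw [← h0, hd 0 ⟨le_rfl, dist_nonneg⟩ u hu, zero_sub, abs_neg, abs_of_nonneg hu.1]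

lemma dist_right (hf : IsGeodesicSegment f a b) (hu : u ∈ Icc 0 (dist a b)) :
    dist (f u) b = dist a b - u := by
  obtain ⟨-, h1, hd⟩ := hf
  have h := hd u hu (dist a b) ⟨dist_nonneg, le_rfl⟩
  rw [h1] at h
  rw [h, abs_of_nonpos (by linarith [hu.2]), neg_sub]

lemma comp_isometry (hf : IsGeodesicSegment f a b) {s : X → Y} (hs : Isometry s) :
    IsGeodesicSegment (s ∘ f) (s a) (s b) := by
  obtain ⟨h0, h1, hd⟩ := hf
  rw [IsGeodesicSegment, hs.dist_eq]
  refine ⟨by simp [h0], by simp [h1], fun u hu v hv => ?_⟩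
  rw [Function.comp_apply, Function.comp_apply, hs.dist_eq, hd u hu v hv]

lemma dist_isometry_le (hf : IsGeodesicSegment f a b) {s : X → X} (hs : Isometry s)
    (hu : u ∈ Icc 0 (dist a b)) (hw : w ∈ Icc 0 (dist a b)) :
    dist (f u) (s (f u)) ≤ dist a (s a) + 2 * dist (f u) (s (f w)) := by
  have hwu : |w - u| ≤ dist a (s a) + dist (f u) (s (f w)) :=
    calc |w - u| = dist (dist (s a) (s (f w))) (dist a (f u)) := by
          rw [Real.dist_eq, hs.dist_eq, hf.dist_left hw, hf.dist_left hu]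
      _ ≤ dist (s a) a + dist (s (f w)) (f u) := dist_dist_dist_le _ _ _ _
      _ = dist a (s a) + dist (f u) (s (f w)) := by rw [dist_comm a, dist_comm (f u)]
  have hsu : dist (s (f w)) (s (f u)) = |w - u| := by rw [hs.dist_eq, hf.2.2 w hw u hu]
  linarith [dist_triangle (f u) (s (f w)) (s (f u))]

lemma const (a : X) : IsGeodesicSegment (fun _ => a) a a :=
  ⟨rfl, rfl, fun u hu v hv => by simp_all⟩

end IsGeodesicSegment

namespace ThinTriangles

variable {X : Type*} [MetricSpace X] {δ : ℝ}

lemma nonneg (hδ : ThinTriangles (X := X) δ) (a : X) : 0 ≤ δ := by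
  obtain ⟨p, -, hp⟩ := hδ a a a _ _ _ (.const a) (.const a) (.const a) 0 (by simp)
  exact dist_nonneg.trans hp

variable {a b c : X} {f g h : ℝ → X} {u : ℝ}

lemma exists_near_left (hδ : ThinTriangles (X := X) δ) (hf : IsGeodesicSegment f a b)
    (hg : IsGeodesicSegment g b c) (hh : IsGeodesicSegment h a c) (hu : u ∈ Icc 0 (dist a c))
    (hfar : δ + dist b c < dist (h u) c) :
    ∃ v ∈ Icc 0 (dist a b), dist (h u) (f v) ≤ δ := by
  obtain ⟨p, ⟨v, hv, rfl⟩ | ⟨w, hw, rfl⟩, hup⟩ := hδ a b c f g h hf hg hh u hu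
  · exact ⟨v, hv, hup⟩
  · have := dist_triangle (h u) (g w) c
    rw [hg.dist_right hw] at this
    linarith [hw.1]

lemma exists_near_right (hδ : ThinTriangles (X := X) δ) (hf : IsGeodesicSegment f a b)
    (hg : IsGeodesicSegment g b c) (hh : IsGeodesicSegment h a c) (hu : u ∈ Icc 0 (dist a c))
    (hfar : δ + dist a b < dist a (h u)) :
    ∃ w ∈ Icc 0 (dist b c), dist (h u) (g w) ≤ δ := by
  obtain ⟨p, ⟨v, hv, rfl⟩ | ⟨w, hw, rfl⟩, hup⟩ := hδ a b c f g h hf hg hh u hu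
  · have := dist_triangle a (f v) (h u)
    rw [hf.dist_left hv, dist_comm (f v)] at this
    linarith [hv.2]
  · exact ⟨w, hw, hup⟩

variable {s : X → X} {seg : ℝ → X} {x y : X}

theorem exists_near_isometry_image (hgeo : GeodesicSpace X) (hδ : ThinTriangles (X := X) δ)
    (hs : Isometry s) (hseg : IsGeodesicSegment seg x y) (hu : u ∈ Icc 0 (dist x y))
    (hy : dist y (s y) + δ < dist (seg u) y) (hx : dist x (s x) + 2 * δ < dist x (seg u)) :
    ∃ w ∈ Icc 0 (dist x y), dist (seg u) (s (seg w)) ≤ 2 * δ := by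
  obtain ⟨g₁, hg₁⟩ := hgeo x (s y)
  obtain ⟨g₂, hg₂⟩ := hgeo (s y) y
  obtain ⟨f₀, hf₀⟩ := hgeo x (s x)
  obtain ⟨v, hv, hzv⟩ :=
    exists_near_left hδ hg₁ hg₂ hseg hu (by rw [dist_comm (s y)]; linarith)
  have hxv := dist_triangle x (g₁ v) (seg u)
  rw [dist_comm (g₁ v)] at hxv
  obtain ⟨w, hw, hvw⟩ := exists_near_right hδ hf₀ (hseg.comp_isometry hs) hg₁ hv (by linarith)
  rw [hs.dist_eq] at hw
  rw [Function.comp_apply] at hvw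
  exact ⟨w, hw, by linarith [dist_triangle (seg u) (g₁ v) (s (seg w))]⟩

end ThinTriangles

/-- Let `X` be a `δ`-hyperbolic geodesic metric space, `s` an isometry of `X`, and
`x, y ∈ X` with `d(x, sx) < C` and `d(y, sy) < d`, where `d, C > δ`.  Then there is a
point `z` on a geodesic segment `[x, y]` satisfying `d(z, sz) < 10C` and
`d(y, z) < 10d`. -/
theorem exists_point_small_displacement_on_geodesic {X : Type*} [MetricSpace X]
    (δ : ℝ) (hgeo : GeodesicSpace X) (hδ : ThinTriangles (X := X) δ)
    (s : X → X) (hs : Isometry s)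
    (x y : X) (C d : ℝ) (hC : δ < C) (hd : δ < d)
    (hx : dist x (s x) < C) (hy : dist y (s y) < d)
    (seg : ℝ → X) (hseg : IsGeodesicSegment seg x y) :
    ∃ u ∈ Icc (0 : ℝ) (dist x y),
      dist (seg u) (s (seg u)) < 10 * C ∧ dist y (seg u) < 10 * d := by
  have hδ0 : 0 ≤ δ := ThinTriangles.nonneg hδ x
  by_cases hdC : d ≤ 10 * C
  · refine ⟨dist x y, ⟨dist_nonneg, le_rfl⟩, ?_, ?_⟩ <;> rw [hseg.2.1]
    · linarith
    · rw [dist_self]; linarith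
  by_cases hL : dist x y ≤ C + d + 3 * δ
  · refine ⟨0, ⟨le_rfl, dist_nonneg⟩, ?_, ?_⟩ <;> rw [hseg.1]
    · linarith
    · rw [dist_comm]; linarith
  push Not at hdC hL
  obtain ⟨t, hdt, htL⟩ := exists_between
    (lt_min (by linarith : d + δ < 10 * d) (by linarith : d + δ < dist x y - C - 2 * δ))
  rw [lt_min_iff] at htL
  have hu : dist x y - t ∈ Icc 0 (dist x y) := ⟨by linarith, by linarith⟩
  have hzy : dist (seg (dist x y - t)) y = t := by rw [hseg.dist_right hu]; ring
  obtain ⟨w, hw, hzw⟩ := ThinTriangles.exists_near_isometry_image hgeo hδ hs hseg hu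
    (by rw [hzy]; linarith) (by rw [hseg.dist_left hu]; linarith)
  refine ⟨_, hu, ?_, by rw [dist_comm, hzy]; exact htL.1⟩
  linarith [hseg.dist_isometry_le hs hu hw]
end

section
/- Let G and K be compact topological groups, H ≤ G and C ≤ K closed subgroups containing no nontrivial closed normal subgroup of G (respectively K). Let Γ ≤ G and Λ ≤ K be dense subgroups, ρ : Γ → Λ an isomorphism, and f : G/H → K/C a continuous map equivariant with respect to ρ (i.e. f(γ·x) = ρ(γ)·f(x) for all γ ∈ Γ). Then there is a continuous surjective homomorphism ρ̂ : G → K extending ρ such that f is ρ̂-equivariant; in particular f is a surjective affine map. -/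
/-!
The pairs `(g, k)` with `f (g • x) = k • f x` for all `x` form a closed subgroup `R` of `G × K`,
containing the graph of `ρ`. The image of `f` is compact and `Λ`-invariant, hence `K`-invariant,
so `f` is onto because `K` acts transitively on `K ⧸ C`. A `k` with `(1, k) ∈ R` then fixes all of
`K ⧸ C`, so it lies in the normal core of `C`, which is closed and hence trivial. By compactness
and density, `R` projects onto both factors, so it is the graph of a surjective homomorphism,
which is continuous because its graph is closed and `K` is compact.
-/

open Function Set

section Equivariance

variable {G K X Y : Type*} [Group G] [Group K] [MulAction G X] [MulAction K Y]

variable (G K) in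
def equivariantPairs (f : X → Y) : Subgroup (G × K) where
  carrier := {p | ∀ x, f (p.1 • x) = p.2 • f x}
  one_mem' x := by simp
  mul_mem' {p q} hp hq x := by rw [Prod.fst_mul, Prod.snd_mul, mul_smul, mul_smul, hp, hq]
  inv_mem' {p} hp x := by
    rw [Prod.fst_inv, Prod.snd_inv, eq_inv_smul_iff, ← hp, smul_inv_smul]

theorem isClosed_equivariantPairs [TopologicalSpace G] [TopologicalSpace K] [TopologicalSpace X]
    [TopologicalSpace Y] [ContinuousSMul G X] [ContinuousSMul K Y] [T2Space Y] {f : X → Y}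
    (hf : Continuous f) : IsClosed (equivariantPairs G K f : Set (G × K)) := by
  show IsClosed {p : G × K | ∀ x, f (p.1 • x) = p.2 • f x}
  simp only [ofPred_forall]
  exact isClosed_iInter fun x => isClosed_eq (hf.comp (continuous_fst.smul continuous_const))
    (continuous_snd.smul continuous_const)

end Equivariance

theorem Subgroup.exists_eq_graph_of_forall_exists {G K : Type*} [Group G] [Group K]
    (R : Subgroup (G × K)) (hfst : ∀ g, ∃ k, (g, k) ∈ R) (hone : ∀ k, ((1 : G), k) ∈ R → k = 1) :
    ∃ φ : G →* K, R = φ.graph := by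
  refine R.exists_eq_graph ⟨(injective_iff_map_eq_one ((MonoidHom.fst G K).comp R.subtype)).2 ?_,
    fun g => ?_⟩
  · rintro ⟨⟨g, k⟩, hp⟩ (rfl : g = 1)
    exact Subtype.ext (Prod.ext rfl (hone k hp))
  · obtain ⟨k, hk⟩ := hfst g
    exact ⟨⟨(g, k), hk⟩, rfl⟩

section Topology

variable {X Y : Type*} [TopologicalSpace X] [TopologicalSpace Y]

theorem Dense.exists_mk_mem [CompactSpace Y] {R : Set (X × Y)} (hR : IsClosed R) {s : Set X}
    (hs : Dense s) (hsR : ∀ x ∈ s, ∃ y, (x, y) ∈ R) (x : X) : ∃ y, (x, y) ∈ R := by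
  refine hs.induction hsR ?_ x
  convert isClosedMap_fst_of_compactSpace R hR
  ext
  simp

theorem continuous_of_isClosed_graph [CompactSpace Y] {φ : X → Y}
    (h : IsClosed {p : X × Y | φ p.1 = p.2}) : Continuous φ := by
  refine continuous_iff_isClosed.mpr fun V hV => ?_
  have hpre : φ ⁻¹' V = Prod.fst '' ({p : X × Y | φ p.1 = p.2} ∩ Prod.snd ⁻¹' V) := by
    ext
    simp
  exact hpre ▸ isClosedMap_fst_of_compactSpace _ (h.inter (hV.preimage continuous_snd))

theorem Continuous.surjective_of_dense_smul_mem_range {K : Type*} [Monoid K] [TopologicalSpace K]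
    [MulAction K Y] [ContinuousSMul K Y] [MulAction.IsPretransitive K Y] [CompactSpace X]
    [T2Space Y] [Nonempty X] {f : X → Y} (hf : Continuous f) {Λ : Set K} (hΛ : Dense Λ)
    (hΛf : ∀ k ∈ Λ, ∀ x, k • f x ∈ range f) : Surjective f := by
  intro y
  obtain ⟨x₀⟩ := ‹Nonempty X›
  obtain ⟨k, rfl⟩ := MulAction.exists_smul_eq K (f x₀) y
  exact hΛ.induction (P := fun k => k • f x₀ ∈ range f) (fun k hk => hΛf k hk x₀)
    ((isCompact_range hf).isClosed.preimage (continuous_id.smul continuous_const)) k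

end Topology

theorem QuotientGroup.eq_one_of_forall_smul_eq {K : Type*} [Group K] [TopologicalSpace K]
    [IsTopologicalGroup K] {C : Subgroup K} (hCcl : IsClosed (C : Set K))
    (hC : ∀ N : Subgroup K, N.Normal → IsClosed (N : Set K) → N ≤ C → N = ⊥) {k : K}
    (hk : ∀ y : K ⧸ C, k • y = y) : k = 1 := by
  have hcore : k ∈ C.normalCore := by
    rw [Subgroup.normalCore_eq_ker, MonoidHom.mem_ker]
    exact Equiv.ext hk
  rwa [hC _ inferInstance (C.normalCore_isClosed hCcl) C.normalCore_le] at hcore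

theorem semiconjugacy_is_affine_general
    {G K : Type*} [Group G] [TopologicalSpace G] [IsTopologicalGroup G] [CompactSpace G]
    [Group K] [TopologicalSpace K] [IsTopologicalGroup K] [CompactSpace K]
    (H : Subgroup G)
    (C : Subgroup K) (hCcl : IsClosed (C : Set K))
    (hC : ∀ N : Subgroup K, N.Normal → IsClosed (N : Set K) → N ≤ C → N = ⊥)
    (Γ : Subgroup G) (hΓ : Dense (Γ : Set G))
    (Λ : Subgroup K) (hΛ : Dense (Λ : Set K))
    (ρ : Γ ≃* Λ)
    (f : G ⧸ H → K ⧸ C) (hf : Continuous f)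
    (hequiv : ∀ (γ : Γ) (x : G ⧸ H), f ((γ : G) • x) = ((ρ γ : Λ) : K) • f x) :
    ∃ ρhat : G →* K, Continuous ρhat ∧ Function.Surjective ρhat ∧
      (∀ γ : Γ, ρhat (γ : G) = ((ρ γ : Λ) : K)) ∧
      (∀ (g : G) (x : G ⧸ H), f (g • x) = ρhat g • f x) ∧
      Function.Surjective f := by
  have := hCcl -- makes `K ⧸ C` Hausdorff
  set R := equivariantPairs G K f
  have hRcl : IsClosed (R : Set (G × K)) := isClosed_equivariantPairs hf
  have hρR (γ : Γ) : ((γ : G), ((ρ γ : Λ) : K)) ∈ R := hequiv γ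
  have hΛρ (k : K) (hk : k ∈ Λ) : ∃ γ : Γ, ((ρ γ : Λ) : K) = k :=
    ⟨ρ.symm ⟨k, hk⟩, by rw [ρ.apply_symm_apply]⟩
  have hfsurj : Surjective f := hf.surjective_of_dense_smul_mem_range hΛ fun k hk x => by
    obtain ⟨γ, rfl⟩ := hΛρ k hk
    exact ⟨(γ : G) • x, hequiv γ x⟩
  obtain ⟨φ, hφ⟩ := R.exists_eq_graph_of_forall_exists
    (hΓ.exists_mk_mem hRcl fun g hg => ⟨_, hρR ⟨g, hg⟩⟩)
    fun k hk => QuotientGroup.eq_one_of_forall_smul_eq hCcl hC fun y => by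
      obtain ⟨x, rfl⟩ := hfsurj y
      rw [← hk x, one_smul]
  have hmem (g : G) (k : K) : (g, k) ∈ R ↔ φ g = k := SetLike.ext_iff.mp hφ (g, k)
  have hφsurj : Surjective φ := fun k => by
    obtain ⟨g, hg⟩ := hΛ.exists_mk_mem (hRcl.preimage continuous_swap) (fun k hk => by
      obtain ⟨γ, rfl⟩ := hΛρ k hk
      exact ⟨γ, hρR γ⟩) k
    exact ⟨g, (hmem g k).mp hg⟩
  exact ⟨φ, continuous_of_isClosed_graph (by rwa [hφ] at hRcl), hφsurj,
    fun γ => (hmem _ _).mp (hρR γ), fun g => (hmem g (φ g)).mpr rfl, hfsurj⟩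

/-- Let `G` and `K` be compact (Hausdorff) topological groups, `H ≤ G` and `C ≤ K`
closed subgroups containing no nontrivial closed normal subgroup of `G` (resp. `K`),
`Γ ≤ G` and `Λ ≤ K` dense subgroups, `ρ : Γ → Λ` an isomorphism, and
`f : G/H → K/C` a continuous `ρ`-equivariant map.  Then there is a continuous
surjective homomorphism `ρ̂ : G → K` extending `ρ` such that `f` is `ρ̂`-equivariant;
in particular `f` is a surjective affine map. -/
theorem semiconjugacy_is_affine
    {G K : Type*} [Group G] [TopologicalSpace G] [IsTopologicalGroup G] [CompactSpace G]
    [T2Space G] [Group K] [TopologicalSpace K] [IsTopologicalGroup K] [CompactSpace K]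
    [T2Space K]
    (H : Subgroup G) (hHcl : IsClosed (H : Set G))
    (hH : ∀ N : Subgroup G, N.Normal → IsClosed (N : Set G) → N ≤ H → N = ⊥)
    (C : Subgroup K) (hCcl : IsClosed (C : Set K))
    (hC : ∀ N : Subgroup K, N.Normal → IsClosed (N : Set K) → N ≤ C → N = ⊥)
    (Γ : Subgroup G) (hΓ : Dense (Γ : Set G))
    (Λ : Subgroup K) (hΛ : Dense (Λ : Set K))
    (ρ : Γ ≃* Λ)
    (f : G ⧸ H → K ⧸ C) (hf : Continuous f)
    (hequiv : ∀ (γ : Γ) (x : G ⧸ H), f ((γ : G) • x) = ((ρ γ : Λ) : K) • f x) :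
    ∃ ρhat : G →* K, Continuous ρhat ∧ Function.Surjective ρhat ∧
      (∀ γ : Γ, ρhat (γ : G) = ((ρ γ : Λ) : K)) ∧
      (∀ (g : G) (x : G ⧸ H), f (g • x) = ρhat g • f x) ∧
      Function.Surjective f :=
  semiconjugacy_is_affine_general H C hCcl hC Γ hΓ Λ hΛ ρ f hf hequiv
end
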